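/- Let Γ be a connected bipartite vertex-transitive finite simple graph of diameter at least 2. Then Γ is 2-distance-balanced. -/

import Mathlib

/-!
Fix `u, v` at distance 2. Bipartiteness makes `d(u,w) + d(v,w)` even, and the triangle
inequality gives `|d(u,w) - d(v,w)| ≤ 2`, so `d(v,w) - d(u,w)` is `2` on `W_{uv}`, `-2` on
`W_{vu}` and `0` elsewhere. Summing over `w`, `2 (|W_{uv}| - |W_{vu}|)` is the difference of
the transmissions `∑ w, d(v,w)` and `∑ w, d(u,w)`, which vanishes because an automorphism
maps `u` to `v`.
-/

open SimpleGraph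

/-- The set of vertices strictly closer to `u` than to `v`. -/
def wSet {V : Type*} (G : SimpleGraph V) (u v : V) : Set V :=
  {w | G.dist u w < G.dist v w}

/-- The pair `u, v` is balanced if `|W_{uv}| = |W_{vu}|`. -/
def IsBalancedPair {V : Type*} (G : SimpleGraph V) (u v : V) : Prop :=
  (wSet G u v).ncard = (wSet G v u).ncard

/-- `G` is `ℓ`-distance-balanced if every pair of vertices at distance `ℓ` is balanced. -/
def IsDistBalanced {V : Type*} (G : SimpleGraph V) (ℓ : ℕ) : Prop :=
  ∀ u v : V, G.dist u v = ℓ → IsBalancedPair G u v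

/-- `G` is highly distance-balanced if it is `ℓ`-distance-balanced for all `1 ≤ ℓ ≤ diam`. -/
def IsHighlyDistBalanced {V : Type*} (G : SimpleGraph V) : Prop :=
  ∀ ℓ : ℕ, 1 ≤ ℓ → ℓ ≤ G.diam → IsDistBalanced G ℓ

/-- The generalized Petersen graph `GP(n,k)`: `Sum.inl i` is the outer vertex `u_i`,
`Sum.inr i` is the inner vertex `v_i`. -/
def GP (n k : ℕ) : SimpleGraph (ZMod n ⊕ ZMod n) :=
  SimpleGraph.fromRel (fun x y =>
    match x, y with
    | Sum.inl i, Sum.inl j => j = i + 1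
    | Sum.inr i, Sum.inr j => j = i + (k : ZMod n)
    | Sum.inl i, Sum.inr j => i = j
    | Sum.inr _, Sum.inl _ => False)

/-- The Cayley graph of a group with connection set `S` (intended for `S = S⁻¹`, `1 ∉ S`). -/
def cayleyGraph {A : Type*} [Group A] (S : Set A) : SimpleGraph A :=
  SimpleGraph.fromRel (fun g h => g⁻¹ * h ∈ S)

namespace SimpleGraph

variable {V V' : Type*} {G : SimpleGraph V} {G' : SimpleGraph V'}

lemma Reachable.dist_map_le (f : G →g G') {u v : V} (h : G.Reachable u v) :
    G'.dist (f u) (f v) ≤ G.dist u v := by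
  obtain ⟨p, hp⟩ := h.exists_walk_length_eq_dist
  exact (dist_le (p.map f)).trans_eq (by rw [Walk.length_map, hp])

lemma Iso.dist_map (φ : G ≃g G') (u v : V) : G'.dist (φ u) (φ v) = G.dist u v := by
  by_cases h : G.Reachable u v
  · refine le_antisymm (h.dist_map_le φ.toHom) ?_
    simpa using ((Iso.reachable_iff (φ := φ)).mpr h).dist_map_le φ.symm.toHom
  · rw [dist_eq_zero_of_not_reachable h,
      dist_eq_zero_of_not_reachable (mt Iso.reachable_iff.mp h)]

lemma Iso.sum_dist_map [Fintype V] [Fintype V'] (φ : G ≃g G') (u : V) :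
    ∑ w, G'.dist (φ u) w = ∑ w, G.dist u w := by
  rw [← Equiv.sum_comp φ.toEquiv]
  exact Finset.sum_congr rfl fun w _ => φ.dist_map u w

lemma Colorable.even_dist_add_dist_add_dist (hbip : G.Colorable 2) {u v w : V}
    (huv : G.Reachable u v) (hvw : G.Reachable v w) :
    Even (G.dist u v + G.dist v w + G.dist w u) := by
  obtain ⟨p, hp⟩ := huv.exists_walk_length_eq_dist
  obtain ⟨q, hq⟩ := hvw.exists_walk_length_eq_dist
  obtain ⟨r, hr⟩ := (huv.trans hvw).symm.exists_walk_length_eq_dist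
  have := two_colorable_iff_forall_loop_even.mp hbip u (p.append (q.append r))
  rwa [Walk.length_append, Walk.length_append, hp, hq, hr, ← add_assoc] at this

lemma Connected.dist_eq_add_two_of_dist_lt (hc : G.Connected) (hbip : G.Colorable 2)
    {u v w : V} (huv : G.dist u v = 2) (hlt : G.dist u w < G.dist v w) :
    G.dist v w = G.dist u w + 2 := by
  have hpar := hbip.even_dist_add_dist_add_dist (hc u v) (hc v w)
  have htri : G.dist v w ≤ G.dist v u + G.dist u w := hc.dist_triangle
  rw [dist_comm (u := v) (v := u), huv] at htri
  rw [huv, dist_comm (u := w)] at hpar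
  obtain ⟨k, hk⟩ := hpar
  omega

end SimpleGraph

lemma ncard_lt_eq_ncard_gt_of_sum_eq {ι : Type*} [Fintype ι] {f g : ι → ℕ} {k : ℕ}
    (hk : 0 < k) (hsum : ∑ i, f i = ∑ i, g i)
    (hfg : ∀ i, f i < g i → g i = f i + k) (hgf : ∀ i, g i < f i → f i = g i + k) :
    {i | f i < g i}.ncard = {i | g i < f i}.ncard := by
  have hpoint : ∀ i, (g i : ℤ) - f i
      = k * (if f i < g i then 1 else 0) - k * (if g i < f i then 1 else 0) := by
    intro i
    rcases lt_trichotomy (f i) (g i) with h | h | h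
    · simp [hfg i h]
    · simp [h]
    · simp [hgf i h]
  have hzero : ∑ i, ((g i : ℤ) - f i) = 0 := by
    rw [Finset.sum_sub_distrib, sub_eq_zero]
    exact_mod_cast hsum.symm
  simp only [hpoint, Finset.sum_sub_distrib, ← Finset.mul_sum, Finset.sum_boole] at hzero
  rw [Set.ncard_eq_toFinset_card', Set.ncard_eq_toFinset_card', Set.toFinset_ofPred,
    Set.toFinset_ofPred]
  have hk' : (k : ℤ) ≠ 0 := by exact_mod_cast hk.ne'
  exact_mod_cast mul_left_cancel₀ hk' (sub_eq_zero.mp hzero)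

theorem statement_5_general {V : Type*} [Fintype V] (G : SimpleGraph V) (hc : G.Connected)
    (hbip : G.Colorable 2)
    (hvt : ∀ u v : V, ∃ α : G ≃g G, α u = v) :
    IsDistBalanced G 2 := by
  intro u v huv
  obtain ⟨α, rfl⟩ := hvt u v
  exact ncard_lt_eq_ncard_gt_of_sum_eq two_pos (α.sum_dist_map u).symm
    (fun _ => hc.dist_eq_add_two_of_dist_lt hbip huv)
    (fun _ => hc.dist_eq_add_two_of_dist_lt hbip (dist_comm.trans huv))

theorem statement_5 {V : Type*} [Fintype V] (G : SimpleGraph V) (hc : G.Connected)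
    (hbip : G.Colorable 2)
    (hvt : ∀ u v : V, ∃ α : G ≃g G, α u = v)
    (hdiam : 2 ≤ G.diam) :
    IsDistBalanced G 2 :=
  statement_5_general G hc hbip hvt
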